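/- arXiv:1603.01500 — 7 statements merged into one kernel-verified Lean document; each statement's English description precedes it below -/
import Mathlib

section
/- For any two points p = (x1,y1) and q = (x2,y2) in the Manhattan plane with x1 = x2 or y1 = y2, the linear segment t ↦ (1-t)·p + t·q, t ∈ [0,1], is (up to reparametrization by arc length) the unique shortest path from p to q; i.e., any path from p to q whose length equals d1(p,q) has image equal to the segment between p and q. -/
/-- The Manhattan plane: `ℝ²` with the `ℓ¹` metric
`d₁((x₁,y₁),(x₂,y₂)) = |x₁-x₂| + |y₁-y₂|`. -/
noncomputable abbrev M1 := WithLp 1 (ℝ × ℝ)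

instance : Fact ((1 : ENNReal) ≤ 1) := ⟨le_rfl⟩

/-!
A path of length `d(p, q)` passes only through points `z` with `d(p, z) + d(z, q) = d(p, q)`,
since its length splits at each parameter and each piece is at least the distance between its
endpoints. In the `ℓ¹` product this equality splits into the same equality for each
coordinate, so each coordinate of `z` lies between those of `p` and `q`; when `p` and `q` agree
in one coordinate, this puts `z` on the segment `[p, q]`. Conversely, by the intermediate value
theorem applied to `t ↦ d(p, γ t)`, the path meets every point of the segment, because a point
of `[p, q]` is determined by its distance to `p`.
-/

open Set

theorem edist_add_edist_le_eVariationOn {α E : Type*} [LinearOrder α] [PseudoEMetricSpace E]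
    (f : α → E) {a t b : α} (hat : a ≤ t) (htb : t ≤ b) :
    edist (f a) (f t) + edist (f t) (f b) ≤ eVariationOn f (Icc a b) := by
  have hsplit := eVariationOn.Icc_add_Icc f (s := univ) hat htb (mem_univ t)
  simp only [univ_inter] at hsplit
  rw [← hsplit]
  exact add_le_add (eVariationOn.edist_le f (left_mem_Icc.2 hat) (right_mem_Icc.2 hat))
    (eVariationOn.edist_le f (left_mem_Icc.2 htb) (right_mem_Icc.2 htb))

theorem dist_add_dist_eq_of_eVariationOn_eq {α E : Type*} [LinearOrder α] [PseudoMetricSpace E]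
    {f : α → E} {a t b : α}
    (hf : eVariationOn f (Icc a b) = ENNReal.ofReal (dist (f a) (f b))) (hat : a ≤ t)
    (htb : t ≤ b) :
    dist (f a) (f t) + dist (f t) (f b) = dist (f a) (f b) := by
  refine le_antisymm ?_ (dist_triangle _ _ _)
  have := edist_add_edist_le_eVariationOn f hat htb
  rwa [hf, edist_dist, edist_dist, ← ENNReal.ofReal_add dist_nonneg dist_nonneg,
    ENNReal.ofReal_le_ofReal_iff dist_nonneg] at this

section Segment

variable {E : Type*} [NormedAddCommGroup E] [NormedSpace ℝ E]

theorem eq_of_mem_segment_of_dist_left_eq {p q x y : E} (hx : x ∈ segment ℝ p q)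
    (hy : y ∈ segment ℝ p q) (hxy : dist p x = dist p y) : x = y := by
  rcases eq_or_ne p q with rfl | hpq
  · rw [segment_same] at hx hy
    rw [hx, hy]
  rw [segment_eq_image_lineMap] at hx hy
  obtain ⟨s, hs, rfl⟩ := hx
  obtain ⟨r, hr, rfl⟩ := hy
  rw [dist_left_lineMap, dist_left_lineMap, Real.norm_of_nonneg hs.1, Real.norm_of_nonneg hr.1,
    mul_left_inj' (dist_ne_zero.2 hpq)] at hxy
  rw [hxy]

theorem segment_subset_image_of_image_subset_segment {γ : ℝ → E}
    (hγ : ContinuousOn γ (Icc 0 1)) (hsub : γ '' Icc 0 1 ⊆ segment ℝ (γ 0) (γ 1)) :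
    segment ℝ (γ 0) (γ 1) ⊆ γ '' Icc 0 1 := by
  intro z hz
  have hdist : dist (γ 0) z ∈ Icc (dist (γ 0) (γ 0)) (dist (γ 0) (γ 1)) := by
    rw [dist_self, ← dist_add_dist_of_mem_segment hz]
    exact ⟨dist_nonneg, le_add_of_nonneg_right dist_nonneg⟩
  obtain ⟨t, ht, hγt⟩ := intermediate_value_Icc zero_le_one
    ((continuous_const.dist continuous_id).comp_continuousOn hγ) hdist
  exact ⟨t, ht, eq_of_mem_segment_of_dist_left_eq (hsub (mem_image_of_mem γ ht)) hz hγt⟩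

end Segment

theorem Prod.mem_segment_of_fst_eq_or_snd_eq {𝕜 E F : Type*} [Ring 𝕜] [PartialOrder 𝕜]
    [IsOrderedRing 𝕜] [AddCommGroup E] [AddCommGroup F] [Module 𝕜 E] [Module 𝕜 F]
    {p q z : E × F} (h : p.1 = q.1 ∨ p.2 = q.2) (h1 : z.1 ∈ segment 𝕜 p.1 q.1)
    (h2 : z.2 ∈ segment 𝕜 p.2 q.2) : z ∈ segment 𝕜 p q := by
  obtain ⟨p1, p2⟩ := p
  obtain ⟨q1, q2⟩ := q
  obtain ⟨z1, z2⟩ := z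
  dsimp only at h h1 h2
  rcases h with rfl | rfl
  · rw [segment_same, mem_singleton_iff] at h1
    rw [h1, ← Prod.image_mk_segment_right]
    exact mem_image_of_mem _ h2
  · rw [segment_same, mem_singleton_iff] at h2
    rw [h2, ← Prod.image_mk_segment_left]
    exact mem_image_of_mem _ h1

namespace WithLp

theorem mem_segment_of_ofLp_mem_segment {p : ENNReal} {𝕜 V : Type*} [Ring 𝕜]
    [PartialOrder 𝕜] [AddCommGroup V] [Module 𝕜 V] {x y z : WithLp p V}
    (h : z.ofLp ∈ segment 𝕜 x.ofLp y.ofLp) : z ∈ segment 𝕜 x y :=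
  let ⟨a, b, ha, hb, hab, hz⟩ := h
  ⟨a, b, ha, hb, hab, ofLp_injective p hz⟩

section L1

variable {α β : Type*} [PseudoMetricSpace α] [PseudoMetricSpace β]

theorem prod_dist_one_eq_add (x y : WithLp 1 (α × β)) :
    dist x y = dist x.fst y.fst + dist x.snd y.snd := by
  rw [prod_dist_eq_add (by norm_num)]
  simp

theorem dist_add_dist_eq_fst_and_snd {x y z : WithLp 1 (α × β)}
    (h : dist x y + dist y z = dist x z) :
    dist x.fst y.fst + dist y.fst z.fst = dist x.fst z.fst ∧
      dist x.snd y.snd + dist y.snd z.snd = dist x.snd z.snd := by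
  simp only [prod_dist_one_eq_add] at h
  have h1 := dist_triangle x.fst y.fst z.fst
  have h2 := dist_triangle x.snd y.snd z.snd
  constructor <;> linarith

end L1

theorem mem_segment_of_dist_add_dist_eq {E F : Type*} [NormedAddCommGroup E] [NormedSpace ℝ E]
    [StrictConvexSpace ℝ E] [NormedAddCommGroup F] [NormedSpace ℝ F] [StrictConvexSpace ℝ F]
    {p q z : WithLp 1 (E × F)} (h : p.fst = q.fst ∨ p.snd = q.snd)
    (hz : dist p z + dist z q = dist p q) : z ∈ segment ℝ p q := by
  obtain ⟨h1, h2⟩ := dist_add_dist_eq_fst_and_snd hz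
  exact mem_segment_of_ofLp_mem_segment <| Prod.mem_segment_of_fst_eq_or_snd_eq h
    (mem_segment_iff_wbtw.2 (dist_add_dist_eq_iff.1 h1))
    (mem_segment_iff_wbtw.2 (dist_add_dist_eq_iff.1 h2))

end WithLp

/-- If `p` and `q` share an abscissa or an ordinate, then any continuous path from `p` to `q`
whose `d₁`-length equals `d₁(p,q)` has image exactly the linear segment between `p` and `q`;
i.e. the segment is, up to reparametrization, the unique shortest path. -/
theorem unique_shortest_path_of_aligned
    (p q : M1)
    (h : (WithLp.equiv 1 (ℝ × ℝ) p).1 = (WithLp.equiv 1 (ℝ × ℝ) q).1 ∨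
         (WithLp.equiv 1 (ℝ × ℝ) p).2 = (WithLp.equiv 1 (ℝ × ℝ) q).2)
    (γ : ℝ → M1)
    (hγ : ContinuousOn γ (Set.Icc 0 1))
    (h0 : γ 0 = p) (h1 : γ 1 = q)
    (hlen : eVariationOn γ (Set.Icc 0 1) = ENNReal.ofReal (dist p q)) :
    γ '' Set.Icc 0 1 = segment ℝ p q := by
  subst h0 h1
  have hsub : γ '' Icc 0 1 ⊆ segment ℝ (γ 0) (γ 1) := by
    rintro _ ⟨t, ⟨h0t, ht1⟩, rfl⟩
    exact WithLp.mem_segment_of_dist_add_dist_eq (by simpa using h)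
      (dist_add_dist_eq_of_eVariationOn_eq hlen h0t ht1)
  exact hsub.antisymm (segment_subset_image_of_image_subset_segment hγ hsub)
end

section
/- A path α = (α1, α2) : [a,b] → ℝ² with α(a) = (x1,y1), α(b) = (x2,y2), x1 ≤ x2 and y1 ≤ y2, is a shortest path in the Manhattan plane if and only if both coordinate functions α1 and α2 are monotone non-decreasing. -/
/-!
In the `ℓ¹` plane the length of a path is at most the sum of the variations of its two
coordinates, and a monotone real function varies by exactly its increment, so monotone
coordinates give length `(x₂ - x₁) + (y₂ - y₁) = d₁(α a, α b)`. Conversely, if a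
coordinate drops, `x(t) < x(s)` for some `s ≤ t`, then the polygon `α a, α s, α t, α b`
already has length at least `d₁(α a, α b) + 2 (x(s) - x(t))`.
-/

open Set

theorem WithLp.prod_one_edist_eq_add {α β : Type*} [PseudoEMetricSpace α] [PseudoEMetricSpace β]
    (f g : WithLp 1 (α × β)) : edist f g = edist f.fst g.fst + edist f.snd g.snd := by
  simp [prod_edist_eq_add (p := 1) (by norm_num)]

theorem WithLp.prod_one_dist_eq_add {α β : Type*} [PseudoMetricSpace α] [PseudoMetricSpace β]
    (f g : WithLp 1 (α × β)) : dist f g = dist f.fst g.fst + dist f.snd g.snd := by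
  simp [prod_dist_eq_add (p := 1) (by norm_num)]

theorem eVariationOn_withLp_one_prod_le {ι E F : Type*} [LinearOrder ι] [PseudoEMetricSpace E]
    [PseudoEMetricSpace F] (f : ι → WithLp 1 (E × F)) (s : Set ι) :
    eVariationOn f s ≤
      eVariationOn (fun t => (f t).fst) s + eVariationOn (fun t => (f t).snd) s := by
  refine iSup_le fun ⟨n, u, hu, us⟩ => ?_
  simp only [WithLp.prod_one_edist_eq_add, Finset.sum_add_distrib]
  exact add_le_add (eVariationOn.sum_le hu us) (eVariationOn.sum_le hu us)

theorem eVariationOn.edist_add_edist_add_edist_le {ι E : Type*} [LinearOrder ι]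
    [PseudoEMetricSpace E] (f : ι → E) {a s t b : ι} (has : a ≤ s) (hst : s ≤ t)
    (htb : t ≤ b) :
    edist (f a) (f s) + edist (f s) (f t) + edist (f t) (f b) ≤ eVariationOn f (Icc a b) := by
  have hsplit := eVariationOn.Icc_add_Icc f (s := univ) has (hst.trans htb) (mem_univ s)
  have hsplit' := eVariationOn.Icc_add_Icc f (s := univ) hst htb (mem_univ t)
  simp only [univ_inter] at hsplit hsplit'
  rw [← hsplit, ← hsplit', add_assoc]
  gcongr <;> exact eVariationOn.edist_le f (by simp [*]) (by simp [*])

theorem dist_add_dist_add_dist_le_of_eVariationOn_eq {E : Type*} [PseudoMetricSpace E]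
    {f : ℝ → E} {a s t b : ℝ} (hf : eVariationOn f (Icc a b) = .ofReal (dist (f a) (f b)))
    (has : a ≤ s) (hst : s ≤ t) (htb : t ≤ b) :
    dist (f a) (f s) + dist (f s) (f t) + dist (f t) (f b) ≤ dist (f a) (f b) := by
  have h := eVariationOn.edist_add_edist_add_edist_le f has hst htb
  rw [hf, edist_dist, edist_dist, edist_dist, ← ENNReal.ofReal_add dist_nonneg dist_nonneg,
    ← ENNReal.ofReal_add (by positivity) dist_nonneg] at h
  exact (ENNReal.ofReal_le_ofReal_iff dist_nonneg).mp h

theorem le_and_le_of_abs_sub_chain_le {xa xs xt xb ya ys yt yb : ℝ}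
    (hx : xa ≤ xb) (hy : ya ≤ yb)
    (h : |xa - xs| + |ya - ys| + (|xs - xt| + |ys - yt|) + (|xt - xb| + |yt - yb|) ≤
      |xa - xb| + |ya - yb|) :
    xs ≤ xt ∧ ys ≤ yt := by
  rw [abs_of_nonpos (sub_nonpos.2 hx), abs_of_nonpos (sub_nonpos.2 hy)] at h
  constructor <;>
  linarith [neg_abs_le (xa - xs), le_abs_self (xs - xt), neg_abs_le (xs - xt),
    neg_abs_le (xt - xb), neg_abs_le (ya - ys), le_abs_self (ys - yt), neg_abs_le (ys - yt),
    neg_abs_le (yt - yb)]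

theorem shortest_path_iff_monotone_components_general
    (a b : ℝ) (hab : a ≤ b) (α : ℝ → M1)
    (hx : (WithLp.equiv 1 (ℝ × ℝ) (α a)).1 ≤ (WithLp.equiv 1 (ℝ × ℝ) (α b)).1)
    (hy : (WithLp.equiv 1 (ℝ × ℝ) (α a)).2 ≤ (WithLp.equiv 1 (ℝ × ℝ) (α b)).2) :
    eVariationOn α (Set.Icc a b) = ENNReal.ofReal (dist (α a) (α b)) ↔
      MonotoneOn (fun t => (WithLp.equiv 1 (ℝ × ℝ) (α t)).1) (Set.Icc a b) ∧
      MonotoneOn (fun t => (WithLp.equiv 1 (ℝ × ℝ) (α t)).2) (Set.Icc a b) := by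
  change (α a).fst ≤ (α b).fst at hx
  change (α a).snd ≤ (α b).snd at hy
  change _ ↔ MonotoneOn (fun t => (α t).fst) _ ∧ MonotoneOn (fun t => (α t).snd) _
  have ha : a ∈ Icc a b := left_mem_Icc.2 hab
  have hb : b ∈ Icc a b := right_mem_Icc.2 hab
  constructor
  · intro hshort
    have hmono {s t} (hs : s ∈ Icc a b) (ht : t ∈ Icc a b) (hst : s ≤ t) :
        (α s).fst ≤ (α t).fst ∧ (α s).snd ≤ (α t).snd := by
      have h := dist_add_dist_add_dist_le_of_eVariationOn_eq hshort hs.1 hst ht.2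
      simp only [WithLp.prod_one_dist_eq_add, Real.dist_eq] at h
      exact le_and_le_of_abs_sub_chain_le hx hy h
    exact ⟨fun s hs t ht hst => (hmono hs ht hst).1,
      fun s hs t ht hst => (hmono hs ht hst).2⟩
  · rintro ⟨hmono₁, hmono₂⟩
    have h₁ := hmono₁.eVariationOn_eq ha hb
    have h₂ := hmono₂.eVariationOn_eq ha hb
    rw [inter_self] at h₁ h₂
    refine le_antisymm ?_ (edist_dist (α a) (α b) ▸ eVariationOn.edist_le α ha hb)
    calc eVariationOn α (Icc a b)
        ≤ eVariationOn (fun t => (α t).fst) (Icc a b) +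
            eVariationOn (fun t => (α t).snd) (Icc a b) := eVariationOn_withLp_one_prod_le α _
      _ = .ofReal ((α b).fst - (α a).fst) + .ofReal ((α b).snd - (α a).snd) := by
          rw [h₁, h₂]
      _ = .ofReal (dist (α a) (α b)) := by
          rw [← ENNReal.ofReal_add (sub_nonneg.2 hx) (sub_nonneg.2 hy),
            WithLp.prod_one_dist_eq_add, Real.dist_eq, Real.dist_eq,
            abs_sub_comm, abs_of_nonneg (sub_nonneg.2 hx),
            abs_sub_comm, abs_of_nonneg (sub_nonneg.2 hy)]

/-- A path `α : [a,b] → ℝ²` from `(x₁,y₁)` to `(x₂,y₂)` with `x₁ ≤ x₂` and `y₁ ≤ y₂` is a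
shortest path in the Manhattan plane (its `d₁`-length equals the `d₁`-distance of its
endpoints) if and only if both coordinate functions are monotone non-decreasing on `[a,b]`. -/
theorem shortest_path_iff_monotone_components
    (a b : ℝ) (hab : a ≤ b) (α : ℝ → M1)
    (hc : ContinuousOn α (Set.Icc a b))
    (hx : (WithLp.equiv 1 (ℝ × ℝ) (α a)).1 ≤ (WithLp.equiv 1 (ℝ × ℝ) (α b)).1)
    (hy : (WithLp.equiv 1 (ℝ × ℝ) (α a)).2 ≤ (WithLp.equiv 1 (ℝ × ℝ) (α b)).2) :
    eVariationOn α (Set.Icc a b) = ENNReal.ofReal (dist (α a) (α b)) ↔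
      MonotoneOn (fun t => (WithLp.equiv 1 (ℝ × ℝ) (α t)).1) (Set.Icc a b) ∧
      MonotoneOn (fun t => (WithLp.equiv 1 (ℝ × ℝ) (α t)).2) (Set.Icc a b) :=
  shortest_path_iff_monotone_components_general a b hab α hx hy
end

section
/- Let A ⊆ ℝ² be finite and nonempty, let (a,b) ∈ A be a point with minimal ordinate (and among those, minimal abscissa), and suppose there exist points (x1,y1) ∈ A with y1 > b, x1 ≥ a, and (x2,y2) ∈ A with y2 > b, x2 ≤ a. Let t = min{ max{y - b : (x,y) ∈ A, y > b, x ≥ a}, max{y - b : (x,y) ∈ A, y > b, x ≤ a} } and let p = (a, b+t). Then every one of the four closed quadrants of p contains a point of A, and consequently the function f_p(q) = d1(p,q) on A satisfies: for every u ∈ A there exists v ∈ A with f_p(u) + f_p(v) = d1(u,v). -/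
/-!
The point `(a, b)` lies in both lower closed quadrants of `p = (a, b + t)` because `t ≥ 0`, and a
highest point of `A` on each side of the vertical line `x = a` lies in the corresponding upper
quadrant because `t` is at most its height above `b`. Once every closed quadrant of `p` meets `A`,
each `u ∈ A` can be paired with a point `v ∈ A` in the opposite quadrant; then `p` lies in the
coordinate box spanned by `u` and `v`, where the triangle inequality for `d1` is an equality.
-/

open Set

/-- The Manhattan metric on `ℝ²`. -/
def d1 (p q : ℝ × ℝ) : ℝ := |p.1 - q.1| + |p.2 - q.2|

lemma abs_sub_add_abs_sub_of_mem_uIcc {x c y : ℝ} (h : c ∈ uIcc x y) :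
    |x - c| + |c - y| = |x - y| := by
  rw [← sub_add_sub_cancel x c y]
  refine ((abs_add_eq_add_abs_iff _ _).mpr ?_).symm
  rcases mem_uIcc.mp h with ⟨hxc, hcy⟩ | ⟨hyc, hcx⟩
  · exact Or.inr ⟨by linarith, by linarith⟩
  · exact Or.inl ⟨by linarith, by linarith⟩

lemma d1_add_d1_eq_of_mem_uIcc {p u v : ℝ × ℝ} (h₁ : p.1 ∈ uIcc u.1 v.1)
    (h₂ : p.2 ∈ uIcc u.2 v.2) : d1 p u + d1 p v = d1 u v := by
  have e₁ := abs_sub_add_abs_sub_of_mem_uIcc h₁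
  have e₂ := abs_sub_add_abs_sub_of_mem_uIcc h₂
  simp only [d1, abs_sub_comm p.1 u.1, abs_sub_comm p.2 u.2]
  linarith

lemma exists_d1_add_d1_eq_of_quadrants {A : Set (ℝ × ℝ)} {c d : ℝ}
    (hQ : (∃ q ∈ A, c ≤ q.1 ∧ d ≤ q.2) ∧ (∃ q ∈ A, c ≤ q.1 ∧ q.2 ≤ d) ∧
      (∃ q ∈ A, q.1 ≤ c ∧ d ≤ q.2) ∧ (∃ q ∈ A, q.1 ≤ c ∧ q.2 ≤ d)) :
    ∀ u ∈ A, ∃ v ∈ A, d1 (c, d) u + d1 (c, d) v = d1 u v := by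
  obtain ⟨⟨q₁, hq₁, hq₁c, hq₁d⟩, ⟨q₂, hq₂, hq₂c, hq₂d⟩, ⟨q₃, hq₃, hq₃c, hq₃d⟩,
    ⟨q₄, hq₄, hq₄c, hq₄d⟩⟩ := hQ
  intro u _
  rcases le_total u.1 c with huc | huc <;> rcases le_total u.2 d with hud | hud
  · exact ⟨q₁, hq₁, d1_add_d1_eq_of_mem_uIcc (mem_uIcc_of_le huc hq₁c) (mem_uIcc_of_le hud hq₁d)⟩
  · exact ⟨q₂, hq₂, d1_add_d1_eq_of_mem_uIcc (mem_uIcc_of_le huc hq₂c) (mem_uIcc_of_ge hq₂d hud)⟩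
  · exact ⟨q₃, hq₃, d1_add_d1_eq_of_mem_uIcc (mem_uIcc_of_ge hq₃c huc) (mem_uIcc_of_le hud hq₃d)⟩
  · exact ⟨q₄, hq₄, d1_add_d1_eq_of_mem_uIcc (mem_uIcc_of_ge hq₄c huc) (mem_uIcc_of_ge hq₄d hud)⟩

lemma exists_mem_eq_sSup_heights {A : Set (ℝ × ℝ)} (hA : A.Finite) {b : ℝ}
    {P : ℝ × ℝ → Prop} (h : ∃ q ∈ A, b < q.2 ∧ P q) :
    ∃ q ∈ A, b < q.2 ∧ P q ∧ q.2 - b = sSup {d : ℝ | ∃ q ∈ A, b < q.2 ∧ P q ∧ d = q.2 - b} := by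
  set S := {d : ℝ | ∃ q ∈ A, b < q.2 ∧ P q ∧ d = q.2 - b}
  have hS : S.Finite := (hA.image fun q => q.2 - b).subset <| by
    rintro _ ⟨q, hq, -, -, rfl⟩
    exact mem_image_of_mem _ hq
  obtain ⟨q, hq, hqb, hqP⟩ := h
  obtain ⟨q', hq', hq'b, hq'P, hq'S⟩ := Nonempty.csSup_mem (s := S) ⟨_, q, hq, hqb, hqP, rfl⟩ hS
  exact ⟨q', hq', hq'b, hq'P, hq'S.symm⟩

theorem spine_step_vertical_general
    (A : Set (ℝ × ℝ)) (hfin : A.Finite)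
    (a b : ℝ) (hab : (a, b) ∈ A)
    (h₁ : ∃ q ∈ A, b < q.2 ∧ a ≤ q.1)
    (h₂ : ∃ q ∈ A, b < q.2 ∧ q.1 ≤ a) :
    (sSup {d : ℝ | ∃ q ∈ A, b < q.2 ∧ a ≤ q.1 ∧ d = q.2 - b}) ⊓
        (sSup {d : ℝ | ∃ q ∈ A, b < q.2 ∧ q.1 ≤ a ∧ d = q.2 - b}) = t →
    ((∃ q ∈ A, a ≤ q.1 ∧ b + t ≤ q.2) ∧
     (∃ q ∈ A, a ≤ q.1 ∧ q.2 ≤ b + t) ∧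
     (∃ q ∈ A, q.1 ≤ a ∧ b + t ≤ q.2) ∧
     (∃ q ∈ A, q.1 ≤ a ∧ q.2 ≤ b + t)) ∧
    ∀ u ∈ A, ∃ v ∈ A, d1 (a, b + t) u + d1 (a, b + t) v = d1 u v := by
  intro ht
  obtain ⟨q₁, hq₁, hq₁b, hq₁a, hq₁S⟩ := exists_mem_eq_sSup_heights hfin h₁
  obtain ⟨q₂, hq₂, hq₂b, hq₂a, hq₂S⟩ := exists_mem_eq_sSup_heights hfin h₂
  rw [← hq₁S, ← hq₂S] at ht
  have ht₁ : t ≤ q₁.2 - b := ht ▸ min_le_left _ _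
  have ht₂ : t ≤ q₂.2 - b := ht ▸ min_le_right _ _
  have ht₀ : 0 ≤ t := ht ▸ le_min (by linarith) (by linarith)
  refine ⟨?quadrants, exists_d1_add_d1_eq_of_quadrants ?quadrants⟩
  exact ⟨⟨q₁, hq₁, hq₁a, by linarith⟩, ⟨(a, b), hab, le_rfl, le_add_of_nonneg_right ht₀⟩,
    ⟨q₂, hq₂, hq₂a, by linarith⟩, ⟨(a, b), hab, le_rfl, le_add_of_nonneg_right ht₀⟩⟩

/-- Case (i) of Step 3 of the tight-span algorithm.  Let `(a,b) ∈ A` have minimal ordinate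
(and among those minimal abscissa), and suppose there are points of `A` strictly above `b`
both with abscissa `≥ a` and with abscissa `≤ a`.  With
`t = min (max {y - b : (x,y) ∈ A, y > b, x ≥ a}) (max {y - b : (x,y) ∈ A, y > b, x ≤ a})`
and `p = (a, b + t)`, every closed quadrant of `p` contains a point of `A`, and consequently
for every `u ∈ A` there is `v ∈ A` with `d₁(p,u) + d₁(p,v) = d₁(u,v)`. -/
theorem spine_step_vertical
    (A : Set (ℝ × ℝ)) (hfin : A.Finite) (hne : A.Nonempty)
    (a b : ℝ) (hab : (a, b) ∈ A)
    (hmin : ∀ q ∈ A, b ≤ q.2)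
    (hminx : ∀ q ∈ A, q.2 = b → a ≤ q.1)
    (h₁ : ∃ q ∈ A, b < q.2 ∧ a ≤ q.1)
    (h₂ : ∃ q ∈ A, b < q.2 ∧ q.1 ≤ a) :
    (sSup {d : ℝ | ∃ q ∈ A, b < q.2 ∧ a ≤ q.1 ∧ d = q.2 - b}) ⊓
        (sSup {d : ℝ | ∃ q ∈ A, b < q.2 ∧ q.1 ≤ a ∧ d = q.2 - b}) = t →
    ((∃ q ∈ A, a ≤ q.1 ∧ b + t ≤ q.2) ∧
     (∃ q ∈ A, a ≤ q.1 ∧ q.2 ≤ b + t) ∧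
     (∃ q ∈ A, q.1 ≤ a ∧ b + t ≤ q.2) ∧
     (∃ q ∈ A, q.1 ≤ a ∧ q.2 ≤ b + t)) ∧
    ∀ u ∈ A, ∃ v ∈ A, d1 (a, b + t) u + d1 (a, b + t) v = d1 u v :=
  spine_step_vertical_general A hfin a b hab h₁ h₂
end

section
/- Let A ⊆ ℝ² be path connected (in the standard topology of ℝ²). Then the horizontal hatching L_x(A) = ⋃_{y ∈ ℝ}[A^y] is path connected, and similarly the vertical hatching L_y(A) = ⋃_{x ∈ ℝ}[A_x] is path connected. -/
/-!
Every point of the hatching lies on a segment `[A^y]`, which is convex and hence joins it to a point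
of `A` inside the hatching; and any two points of `A` are joined inside `A`, which is contained in
the hatching.
-/

/-- Horizontal hatching of `A ⊆ ℝ²`. -/
def Lx (A : Set (ℝ × ℝ)) : Set (ℝ × ℝ) :=
  ⋃ y : ℝ, convexHull ℝ {p ∈ A | p.2 = y}

/-- Vertical hatching of `A ⊆ ℝ²`. -/
def Ly (A : Set (ℝ × ℝ)) : Set (ℝ × ℝ) :=
  ⋃ x : ℝ, convexHull ℝ {p ∈ A | p.1 = x}

open Set

theorem IsPathConnected.iUnion_convexHull_fiber {E β : Type*} [AddCommGroup E] [Module ℝ E]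
    [TopologicalSpace E] [ContinuousAdd E] [ContinuousSMul ℝ E] {A : Set E}
    (hA : IsPathConnected A) (f : E → β) :
    IsPathConnected (⋃ y, convexHull ℝ {p ∈ A | f p = y}) := by
  have hAL : A ⊆ ⋃ y, convexHull ℝ {p ∈ A | f p = y} := fun a ha =>
    mem_iUnion.2 ⟨f a, subset_convexHull ℝ _ ⟨ha, rfl⟩⟩
  obtain ⟨b, hb, hbA⟩ := hA
  refine ⟨b, hAL hb, fun x hx => ?_⟩
  obtain ⟨y, hxy⟩ := mem_iUnion.1 hx
  obtain ⟨a, ha, hay⟩ := convexHull_nonempty_iff.1 ⟨x, hxy⟩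
  have hax : JoinedIn (convexHull ℝ {p ∈ A | f p = y}) a x :=
    ((convex_convexHull ℝ _).isPathConnected ⟨x, hxy⟩).joinedIn a
      (subset_convexHull ℝ _ ⟨ha, hay⟩) x hxy
  exact ((hbA ha).mono hAL).trans (hax.mono (subset_iUnion_of_subset y subset_rfl))

/-- If `A ⊆ ℝ²` is path connected, then both its horizontal hatching `Lx A` and its
vertical hatching `Ly A` are path connected. -/
theorem hatching_pathConnected (A : Set (ℝ × ℝ)) (hA : IsPathConnected A) :
    IsPathConnected (Lx A) ∧ IsPathConnected (Ly A) :=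
  ⟨hA.iUnion_convexHull_fiber Prod.snd, hA.iUnion_convexHull_fiber Prod.fst⟩
end

section
/- For a path connected subset A ⊆ ℝ², the hatching operations commute: L_x(L_y(A)) = L_y(L_x(A)). -/
open Set

section FirstCrossing

variable {α δ : Type*} [ConditionallyCompleteLinearOrder α] [TopologicalSpace α] [OrderTopology α]
  [DenselyOrdered α] [LinearOrder δ] [TopologicalSpace δ] [OrderClosedTopology δ]
  {f : α → δ} {a b : α} {c : δ}

theorem ContinuousOn.exists_first_eq (hab : a ≤ b) (hf : ContinuousOn f (Icc a b))
    (ha : f a ≤ c) (hb : c ≤ f b) : ∃ t ∈ Icc a b, f t = c ∧ ∀ s ∈ Icc a t, f s ≤ c := by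
  have hZ : IsCompact (Icc a b ∩ f ⁻¹' {c}) :=
    isCompact_Icc.of_isClosed_subset
      (hf.preimage_isClosed_of_isClosed isClosed_Icc isClosed_singleton) inter_subset_left
  obtain ⟨t, ⟨ht, hft⟩, ht_least⟩ := hZ.exists_isLeast (intermediate_value_Icc hab hf ⟨ha, hb⟩)
  refine ⟨t, ht, hft, fun s hs => not_lt.1 fun hcs => ?_⟩
  obtain ⟨r, hr, hfr⟩ :=
    intermediate_value_Icc hs.1 (hf.mono (Icc_subset_Icc_right (hs.2.trans ht.2))) ⟨ha, hcs.le⟩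
  have hrt : t ≤ r := ht_least ⟨⟨hr.1, hr.2.trans (hs.2.trans ht.2)⟩, hfr⟩
  exact hcs.ne' (le_antisymm hr.2 (hs.2.trans hrt) ▸ hfr)

theorem ContinuousOn.exists_last_eq (hab : a ≤ b) (hf : ContinuousOn f (Icc a b))
    (ha : f a ≤ c) (hb : c ≤ f b) : ∃ t ∈ Icc a b, f t = c ∧ ∀ s ∈ Icc t b, c ≤ f s := by
  obtain ⟨t, ht, hft, hafter⟩ := ContinuousOn.exists_first_eq (α := αᵒᵈ) (δ := δᵒᵈ) (f := f)
    (a := b) (b := a) (c := c) hab (hf.mono fun _ hx => ⟨hx.2, hx.1⟩) hb ha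
  exact ⟨t, ⟨ht.2, ht.1⟩, hft, fun s hs => hafter s ⟨hs.2, hs.1⟩⟩

end FirstCrossing

theorem exists_straddling_pair_of_continuousOn {g h : ℝ → ℝ} {a b x y : ℝ} (hab : a ≤ b)
    (hg : ContinuousOn g (Icc a b)) (hh : ContinuousOn h (Icc a b))
    (hga : g a ≤ x) (hgb : x ≤ g b) (hha : y ≤ h a) (hhb : y ≤ h b) :
    ∃ s ∈ Icc a b, ∃ t ∈ Icc a b, h s = h t ∧ y ≤ h s ∧ g s ≤ x ∧ x ≤ g t := by
  obtain ⟨t₁, ht₁, hgt₁, hbefore⟩ := hg.exists_first_eq hab hga hgb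
  obtain ⟨t₂, ht₂, hgt₂, hafter⟩ := hg.exists_last_eq hab hga hgb
  by_cases h₁ : y ≤ h t₁
  · exact ⟨t₁, ht₁, t₁, ht₁, rfl, h₁, hgt₁.le, hgt₁.ge⟩
  by_cases h₂ : y ≤ h t₂
  · exact ⟨t₂, ht₂, t₂, ht₂, rfl, h₂, hgt₂.le, hgt₂.ge⟩
  obtain ⟨s, hs, hhs⟩ := intermediate_value_Icc' ht₁.1 (hh.mono (Icc_subset_Icc_right ht₁.2))
    ⟨(not_le.1 h₁).le, hha⟩
  obtain ⟨t, ht, hht⟩ := intermediate_value_Icc ht₂.2 (hh.mono (Icc_subset_Icc_left ht₂.1))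
    ⟨(not_le.1 h₂).le, hhb⟩
  exact ⟨s, ⟨hs.1, hs.2.trans ht₁.2⟩, t, ⟨ht₂.1.trans ht.1, ht.2⟩, hhs.trans hht.symm, hhs.ge,
    hbefore s hs, hafter t ht⟩

theorem IsPathConnected.exists_straddling_pair {X : Type*} [TopologicalSpace X] {A : Set X}
    (hA : IsPathConnected A) {φ ψ : X → ℝ} (hφ : Continuous φ) (hψ : Continuous ψ) {p q : X}
    (hp : p ∈ A) (hq : q ∈ A) {x y : ℝ} (hpx : φ p ≤ x) (hxq : x ≤ φ q) (hyp : y ≤ ψ p)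
    (hyq : y ≤ ψ q) : ∃ u ∈ A, ∃ v ∈ A, ψ u = ψ v ∧ y ≤ ψ u ∧ φ u ≤ x ∧ x ≤ φ v := by
  obtain ⟨γ, hγA⟩ := hA.joinedIn p hp q hq
  have hγ : γ.extend '' Icc 0 1 ⊆ A := by
    rw [γ.image_extend_of_subset le_rfl]
    exact range_subset_iff.2 hγA
  obtain ⟨s, hs, t, ht, hst⟩ := exists_straddling_pair_of_continuousOn zero_le_one
    (hφ.comp γ.continuous_extend).continuousOn (hψ.comp γ.continuous_extend).continuousOn
    (by simpa using hpx) (by simpa using hxq) (by simpa using hyp) (by simpa using hyq)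
  exact ⟨_, hγ (mem_image_of_mem _ hs), _, hγ (mem_image_of_mem _ ht), hst⟩

theorem mem_convexHull_iff_exists_le_le {𝕜 : Type*} [Field 𝕜] [LinearOrder 𝕜]
    [IsStrictOrderedRing 𝕜] {s : Set 𝕜} {x : 𝕜} :
    x ∈ convexHull 𝕜 s ↔ ∃ a ∈ s, ∃ b ∈ s, a ≤ x ∧ x ≤ b := by
  refine ⟨fun hx => convexHull_min (t := {x | ∃ a ∈ s, ∃ b ∈ s, a ≤ x ∧ x ≤ b})
    (fun a ha => ⟨a, ha, a, ha, le_rfl, le_rfl⟩) ?_ hx, ?_⟩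
  · refine OrdConnected.convex ⟨?_⟩
    rintro _ ⟨a, ha, -, -, hax, -⟩ _ ⟨-, -, b, hb, -, hxb⟩ z hz
    exact ⟨a, ha, b, hb, hax.trans hz.1, hz.2.trans hxb⟩
  · rintro ⟨a, ha, b, hb, hax, hxb⟩
    exact segment_subset_convexHull ha hb (segment_eq_Icc (hax.trans hxb) ▸ ⟨hax, hxb⟩)

theorem mem_Lx {A : Set (ℝ × ℝ)} {p : ℝ × ℝ} :
    p ∈ Lx A ↔ p.1 ∈ convexHull ℝ {t | (t, p.2) ∈ A} := by
  have hline : ∀ y, {q ∈ A | q.2 = y} = {t | (t, y) ∈ A} ×ˢ {y} := fun y => by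
    ext ⟨t, z⟩; constructor <;> rintro ⟨h, rfl⟩ <;> exact ⟨h, rfl⟩
  simp [Lx, hline, convexHull_prod]

theorem mem_Ly {A : Set (ℝ × ℝ)} {p : ℝ × ℝ} :
    p ∈ Ly A ↔ p.2 ∈ convexHull ℝ {t | (p.1, t) ∈ A} := by
  have hline : ∀ x, {q ∈ A | q.1 = x} = {x} ×ˢ {t | (x, t) ∈ A} := fun x => by
    ext ⟨z, t⟩; constructor
    · rintro ⟨h, rfl⟩; exact ⟨rfl, h⟩
    · rintro ⟨rfl, h⟩; exact ⟨h, rfl⟩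
  simp [Ly, hline, convexHull_prod]

theorem Lx_preimage_swap (A : Set (ℝ × ℝ)) : Lx (Prod.swap ⁻¹' A) = Prod.swap ⁻¹' Ly A := by
  ext p
  simp [mem_Lx, mem_Ly]

theorem Ly_preimage_swap (A : Set (ℝ × ℝ)) : Ly (Prod.swap ⁻¹' A) = Prod.swap ⁻¹' Lx A := by
  ext p
  simp [mem_Lx, mem_Ly]

theorem Lx_Ly_subset {A : Set (ℝ × ℝ)} (hA : IsPathConnected A) : Lx (Ly A) ⊆ Ly (Lx A) := by
  rintro ⟨x, y⟩ hp
  simp only [mem_Lx, mem_Ly, mem_convexHull_iff_exists_le_le, mem_ofPred_eq] at hp ⊢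
  obtain ⟨a, ⟨c₁, hc₁, d₁, hd₁, hc₁y, hyd₁⟩, b, ⟨c₂, hc₂, d₂, hd₂, hc₂y, hyd₂⟩, hax, hxb⟩ := hp
  obtain ⟨u, hu, v, hv, huv, hyu, hux, hxv⟩ := hA.exists_straddling_pair (p := (a, d₁))
    (q := (b, d₂)) continuous_fst continuous_snd hd₁ hd₂ hax hxb hyd₁ hyd₂
  obtain ⟨u', hu', v', hv', huv', hyu', hux', hxv'⟩ := hA.exists_straddling_pair (p := (a, c₁))
    (q := (b, c₂)) continuous_fst continuous_snd.neg hc₁ hc₂ hax hxb (neg_le_neg hc₁y)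
    (neg_le_neg hc₂y)
  refine ⟨u'.2, ⟨u'.1, hu', v'.1, ?_, hux', hxv'⟩, u.2, ⟨u.1, hu, v.1, ?_, hux, hxv⟩,
    neg_le_neg_iff.1 hyu', hyu⟩
  · rw [neg_inj.1 huv']; exact hv'
  · rw [huv]; exact hv

/-- For a path connected subset `A ⊆ ℝ²`, the hatching operations commute:
`Lx (Ly A) = Ly (Lx A)`. -/
theorem hatching_comm (A : Set (ℝ × ℝ)) (hA : IsPathConnected A) :
    Lx (Ly A) = Ly (Lx A) := by
  refine (Lx_Ly_subset hA).antisymm ?_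
  have hswap := Lx_Ly_subset (A := Prod.swap ⁻¹' A) <| by
    simpa only [image_swap_eq_preimage_swap] using hA.image continuous_swap
  rw [Ly_preimage_swap, Lx_preimage_swap, Lx_preimage_swap, Ly_preimage_swap] at hswap
  exact Prod.swap_surjective.preimage_subset_preimage_iff.1 hswap
end

section
/- Let A = {(-1,0), (0,-2), (3/2,1)} ⊆ ℝ² with the d1 metric. Then the orthogonal hull of A, defined as the set of points p ∈ ℝ² such that every closed quadrant of p contains a point of A, is not path connected. -/
/-!
The only point of `A` on or above the line `y = 1/2` is `(3/2, 1)`, so a hull point on that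
line must have `x = 3/2`, and then its lower-right quadrant misses `A`.
Hence the line `y = 1/2` separates the hull points `(-1, 0)` and `(3/2, 1)`: the hull is not
even connected.
-/

/-- The orthogonal hull of `A ⊆ ℝ²`: the set of points `p` such that each of the four closed
quadrants of `p` contains a point of `A`. -/
def orthogonalHull (A : Set (ℝ × ℝ)) : Set (ℝ × ℝ) :=
  {p : ℝ × ℝ |
    (∃ q ∈ A, p.1 ≤ q.1 ∧ p.2 ≤ q.2) ∧
    (∃ q ∈ A, p.1 ≤ q.1 ∧ q.2 ≤ p.2) ∧
    (∃ q ∈ A, q.1 ≤ p.1 ∧ p.2 ≤ q.2) ∧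
    (∃ q ∈ A, q.1 ≤ p.1 ∧ q.2 ≤ p.2)}

theorem subset_orthogonalHull (A : Set (ℝ × ℝ)) : A ⊆ orthogonalHull A := fun p hp =>
  ⟨⟨p, hp, le_rfl, le_rfl⟩, ⟨p, hp, le_rfl, le_rfl⟩, ⟨p, hp, le_rfl, le_rfl⟩,
    ⟨p, hp, le_rfl, le_rfl⟩⟩

def eppsteinTriple : Set (ℝ × ℝ) :=
  {((-1 : ℝ), (0 : ℝ)), ((0 : ℝ), (-2 : ℝ)), ((3/2 : ℝ), (1 : ℝ))}

theorem eq_of_mem_eppsteinTriple_of_half_le_snd {q : ℝ × ℝ} (hq : q ∈ eppsteinTriple)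
    (h : 1/2 ≤ q.2) : q = ((3/2 : ℝ), (1 : ℝ)) := by
  rcases hq with rfl | rfl | rfl
  · norm_num at h
  · norm_num at h
  · rfl

theorem snd_ne_half_of_mem_orthogonalHull_eppsteinTriple {p : ℝ × ℝ}
    (hp : p ∈ orthogonalHull eppsteinTriple) : p.2 ≠ 1/2 := by
  intro hp2
  obtain ⟨⟨q, hq, hxq, hyq⟩, ⟨r, hr, hxr, hyr⟩, ⟨s, hs, hxs, hys⟩, -⟩ := hp
  rw [eq_of_mem_eppsteinTriple_of_half_le_snd hq (hp2 ▸ hyq)] at hxq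
  rw [eq_of_mem_eppsteinTriple_of_half_le_snd hs (hp2 ▸ hys)] at hxs
  rcases hr with rfl | rfl | rfl <;> norm_num at hxr hyr <;> linarith

/-- For `A = {(-1,0), (0,-2), (3/2,1)}` the orthogonal hull of `A` is not path connected
(the counterexample to Eppstein's Lemma 9 without taking closures). -/
theorem orthogonalHull_not_pathConnected :
    ¬ IsPathConnected
        (orthogonalHull {((-1 : ℝ), (0 : ℝ)), ((0 : ℝ), (-2 : ℝ)), ((3/2 : ℝ), (1 : ℝ))}) := by
  intro h
  obtain ⟨p, hp, hp2⟩ : (1/2 : ℝ) ∈ Prod.snd '' orthogonalHull eppsteinTriple :=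
    h.isConnected.isPreconnected.intermediate_value
      (subset_orthogonalHull eppsteinTriple (by simp [eppsteinTriple] : ((-1 : ℝ), (0 : ℝ)) ∈ _))
      (subset_orthogonalHull eppsteinTriple (by simp [eppsteinTriple] : ((3/2 : ℝ), (1 : ℝ)) ∈ _))
      continuous_snd.continuousOn (by norm_num)
  exact snd_ne_half_of_mem_orthogonalHull_eppsteinTriple hp hp2
end

section
/- The tight span of any metric space (X,d) is itself a metric space under d∞, and the triangle inequality and point separation hold: for f, g ∈ T(X), d∞(f,g) = 0 implies f = g, and moreover for any f ∈ T(X) and p ∈ X, f(p) = d∞(f, e(p)) where e(p) = d(p,·). -/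
/-
A tight function is 1-Lipschitz: lowering it to `min (f x) (f p + d(p, x))` keeps it admissible,
so minimality forces `f x ≤ f p + d(p, x)`. Combined with admissibility this gives
`|f q - d(p, q)| ≤ f p`, with equality at `q = p`; hence `f p = d∞(f, e p)`, and in particular
`d∞` is finite on the tight span, where the sup-metric axioms then hold pointwise.
-/

/-- Membership in the tight span: pointwise minimal nonnegative `f` with
`f p + f q ≥ d p q`. -/
def IsTight {X : Type*} [MetricSpace X] (f : X → ℝ) : Prop :=
  (∀ p, 0 ≤ f p) ∧ (∀ p q, dist p q ≤ f p + f q) ∧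
    ∀ g : X → ℝ, (∀ p, 0 ≤ g p) → (∀ p q, dist p q ≤ g p + g q) →
      (∀ p, g p ≤ f p) → g = f

namespace IsTight

variable {X : Type*} [MetricSpace X] {f g : X → ℝ}

theorem le_add_dist (hf : IsTight f) (p q : X) : f q ≤ f p + dist p q := by
  obtain ⟨hf_nonneg, hf_adm, hf_min⟩ := hf
  set f' : X → ℝ := fun x => min (f x) (f p + dist p x)
  have hf'_adm : ∀ x y, dist x y ≤ f' x + f' y := by
    intro x y
    simp only [f', ← min_add_add_right, ← min_add_add_left, le_min_iff]
    refine ⟨⟨hf_adm x y, ?_⟩, ?_, ?_⟩ <;>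
      linarith [hf_adm p x, hf_adm p y, dist_triangle x p y, dist_comm p x, hf_nonneg p]
  have hf'_nonneg : ∀ x, 0 ≤ f' x := fun x =>
    le_min (hf_nonneg x) (add_nonneg (hf_nonneg p) dist_nonneg)
  have hf'_eq : f' = f := hf_min f' hf'_nonneg hf'_adm fun x => min_le_left _ _
  calc f q = f' q := by rw [hf'_eq]
    _ ≤ f p + dist p q := min_le_right _ _

theorem abs_sub_dist_le (hf : IsTight f) (p q : X) : |f q - dist p q| ≤ f p :=
  abs_sub_le_iff.2 ⟨by linarith [hf.le_add_dist p q], by linarith [hf.2.1 p q]⟩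

theorem abs_sub_le_add (hf : IsTight f) (hg : IsTight g) (x p : X) : |f p - g p| ≤ f x + g x :=
  calc |f p - g p| ≤ |f p - dist x p| + |dist x p - g p| := abs_sub_le _ _ _
    _ ≤ f x + g x := by
      rw [abs_sub_comm (dist x p)]
      exact add_le_add (hf.abs_sub_dist_le x p) (hg.abs_sub_dist_le x p)

theorem abs_sub_le_iSup (hf : IsTight f) (hg : IsTight g) (p : X) :
    |f p - g p| ≤ ⨆ q, |f q - g q| :=
  le_ciSup ⟨f p + g p, Set.forall_mem_range.2 (hf.abs_sub_le_add hg p)⟩ p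

theorem eq_iSup_abs_sub_dist (hf : IsTight f) (p : X) : f p = ⨆ q, |f q - dist p q| := by
  have : Nonempty X := ⟨p⟩
  refine le_antisymm ?_ (ciSup_le (hf.abs_sub_dist_le p))
  calc f p = |f p - dist p p| := by rw [dist_self, sub_zero, abs_of_nonneg (hf.1 p)]
    _ ≤ ⨆ q, |f q - dist p q| :=
      le_ciSup ⟨f p, Set.forall_mem_range.2 (hf.abs_sub_dist_le p)⟩ p

end IsTight

/-- The tight span of a metric space is itself a metric space under the sup metric
`d∞(f,g) = sup_p |f p - g p|`: the triangle inequality holds, `d∞(f,g) = 0` implies `f = g`,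
and for `f` in the tight span and `p ∈ X` one has `f p = d∞(f, e p)` where `e p = d(p,·)`. -/
theorem tight_span_metric_space
    {X : Type*} [MetricSpace X] :
    (∀ f g h : X → ℝ, IsTight f → IsTight g → IsTight h →
      (⨆ p : X, |f p - h p|) ≤ (⨆ p : X, |f p - g p|) + ⨆ p : X, |g p - h p|) ∧
    (∀ f g : X → ℝ, IsTight f → IsTight g → (⨆ p : X, |f p - g p|) = 0 → f = g) ∧
    (∀ f : X → ℝ, IsTight f → ∀ p : X, f p = ⨆ q : X, |f q - dist p q|) := by
  refine ⟨fun f g h hf hg hh => ?_, fun f g hf hg hfg => ?_, fun f hf => hf.eq_iSup_abs_sub_dist⟩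
  · refine Real.iSup_le (fun p => ?_) (add_nonneg (Real.iSup_nonneg fun _ => abs_nonneg _)
      (Real.iSup_nonneg fun _ => abs_nonneg _))
    calc |f p - h p| ≤ |f p - g p| + |g p - h p| := abs_sub_le _ _ _
      _ ≤ _ := add_le_add (hf.abs_sub_le_iSup hg p) (hg.abs_sub_le_iSup hh p)
  · funext p
    have hp : |f p - g p| ≤ 0 := hfg ▸ hf.abs_sub_le_iSup hg p
    exact sub_eq_zero.1 (abs_nonpos_iff.1 hp)
end
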